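/- Let k be a field of characteristic zero, B a finitely generated k-algebra which is an integral domain, and G a totally ordered abelian group. If deg : B → G ∪ {−∞} is the degree function determined by some G-grading of B, then deg is tame over k. More precisely, given any choice of homogeneous elements x₁, …, x_n ∈ B satisfying B = k[x₁, …, x_n], for every k-derivation D : B → B, deg(D) is defined and deg(D) = max{δ_D(x₁), …, δ_D(x_n)}. -/

import Mathlib

section DegreePrelude

variable {B : Type*} [CommRing B] {G : Type*} [AddCommGroup G] [LinearOrder G] [IsOrderedAddMonoid G]

/-- A degree function on `B` with values in `G ∪ {-∞}` -/
def IsDegreeFunction (deg : B → WithBot G) : Prop :=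
  (∀ x : B, deg x = ⊥ ↔ x = 0) ∧
  (∀ x y : B, deg (x * y) = deg x + deg y) ∧
  (∀ x y : B, deg (x + y) ≤ max (deg x) (deg y))

/-- `degDelta deg D x = deg (D x) - deg x` (with value `-∞` if `D x = 0`). -/
noncomputable def degDelta (deg : B → WithBot G) (D : B → B) (x : B) : WithBot G :=
  (deg (D x)).map fun a => a - WithBot.unbotD 0 (deg x)

/-- The set `{deg (D x) - deg x : x ∈ B \ {0}}`. -/
def degDeltaSet (deg : B → WithBot G) (D : B → B) : Set (WithBot G) :=
  {m | ∃ x : B, x ≠ 0 ∧ degDelta deg D x = m}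

/-- `deg (D)` is defined, i.e. the set `{deg (D x) - deg x : x ≠ 0}` has a
greatest element in `G ∪ {-∞}`. -/
def DegreeDefinedAt (deg : B → WithBot G) (D : B → B) : Prop :=
  ∃ M, IsGreatest (degDeltaSet deg D) M

end DegreePrelude

/-!
Constants lie in degree 0. Indeed, units of a domain graded by an ordered group are homogeneous:
the lowest and the highest components of `x * y = 1` are products of the lowest, resp. highest,
components of `x` and `y`, so `min x + min y = 0 = max x + max y`, forcing `min x = max x`. And if
`c` and `1 + c` are both homogeneous, comparing components of degree 0 puts `c` in degree 0.

Let `m` be the largest `δ_D(xᵢ)`. By the Leibniz rule the bound `deg (D w) ≤ deg w + m` passes to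
products, so it holds for all monomials in the `xᵢ`, which are homogeneous. As constants have
degree 0, the bound on each homogeneous component then passes to `k`-linear combinations of
monomials, and since `deg` is the degree of the top component it holds for every element.
-/

open DirectSum

section DegreeFunction

variable {B G : Type*} [CommRing B] [AddCommGroup G] [LinearOrder G] {deg : B → WithBot G}

namespace IsDegreeFunction

variable (hdeg : IsDegreeFunction deg)
include hdeg

theorem deg_zero : deg 0 = ⊥ := (hdeg.1 0).2 rfl

theorem deg_mul (x y : B) : deg (x * y) = deg x + deg y := hdeg.2.1 x y

theorem deg_add_le (x y : B) : deg (x + y) ≤ max (deg x) (deg y) := hdeg.2.2 x y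

theorem exists_eq_coe {x : B} (hx : x ≠ 0) : ∃ e : G, deg x = e :=
  WithBot.ne_bot_iff_exists.1 (fun h => hx ((hdeg.1 x).1 h)) |>.imp fun _ h => h.symm

theorem deg_sum_le {ι : Type*} (s : Finset ι) (f : ι → B) {c : WithBot G}
    (h : ∀ i ∈ s, deg (f i) ≤ c) : deg (∑ i ∈ s, f i) ≤ c := by
  classical
  induction s using Finset.induction_on with
  | empty => simp [hdeg.deg_zero]
  | insert a s ha ih =>
    rw [Finset.sum_insert ha]
    exact (hdeg.deg_add_le _ _).trans
      (max_le (h a (Finset.mem_insert_self a s)) (ih fun i hi => h i (Finset.mem_insert_of_mem hi)))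

theorem degDelta_eq_bot {D : B → B} {x : B} (hx : D x = 0) : degDelta deg D x = ⊥ := by
  simp [degDelta, hx, hdeg.deg_zero]

variable [IsOrderedAddMonoid G] {R : Type*} [CommRing R] [Algebra R B] (D : Derivation R B B)

theorem degDelta_le_iff (x : B) (m : WithBot G) :
    degDelta deg D x ≤ m ↔ deg (D x) ≤ deg x + m := by
  rcases eq_or_ne x 0 with rfl | hx
  · rw [hdeg.degDelta_eq_bot D.map_zero, D.map_zero, hdeg.deg_zero]
    simp
  obtain ⟨e, he⟩ := hdeg.exists_eq_coe hx
  rw [degDelta, he]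
  cases deg (D x) <;> cases m <;> simp [← WithBot.coe_add, add_comm e]

theorem deg_derivation_le_of_mem_closure {m : WithBot G} {s : Set B}
    (hs : ∀ x ∈ s, deg (D x) ≤ deg x + m) {w : B} (hw : w ∈ Submonoid.closure s) :
    deg (D w) ≤ deg w + m := by
  induction hw using Submonoid.closure_induction with
  | mem x hx => exact hs x hx
  | one => simp [hdeg.deg_zero]
  | mul u v _ _ hu hv =>
    rw [D.leibniz, smul_eq_mul, smul_eq_mul, hdeg.deg_mul u v]
    refine (hdeg.deg_add_le _ _).trans (max_le ?_ ?_) <;> rw [hdeg.deg_mul]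
    · calc deg u + deg (D v) ≤ deg u + (deg v + m) := by gcongr
        _ = deg u + deg v + m := (add_assoc _ _ _).symm
    · calc deg v + deg (D u) ≤ deg v + (deg u + m) := by gcongr
        _ = deg u + deg v + m := by rw [← add_assoc, add_comm (deg v)]

end IsDegreeFunction

end DegreeFunction

section Graded

variable {B G : Type*} [CommRing B] [AddCommGroup G] [DecidableEq G] (𝒜 : G → AddSubgroup B)
  [GradedRing 𝒜]

theorem coe_decompose_mul_of_unique [∀ (i : G) (x : 𝒜 i), Decidable (x ≠ 0)] {x y : B} {a b : G}
    (h : ∀ p ∈ (decompose 𝒜 x).support, ∀ q ∈ (decompose 𝒜 y).support,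
      p + q = a + b → p = a ∧ q = b) :
    (decompose 𝒜 (x * y) (a + b) : B) = decompose 𝒜 x a * decompose 𝒜 y b := by
  rw [decompose_mul, coe_mul_apply]
  refine Finset.sum_eq_single (a, b) ?_ ?_
  · rintro ⟨p, q⟩ hpq hne
    simp only [Finset.mem_filter, Finset.mem_product] at hpq
    exact absurd (Prod.ext_iff.2 (h p hpq.1.1 q hpq.1.2 hpq.2)) hne
  · intro hab
    simp only [Finset.mem_filter, Finset.mem_product, DFinsupp.mem_support_iff, ne_eq, and_true,
      not_and_or, not_not] at hab
    rcases hab with hab | hab <;> simp [hab]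

theorem exists_fin_isHomogeneousElem_adjoin_eq_top {k : Type*} [CommRing k] [Algebra k B]
    [Algebra.FiniteType k B] :
    ∃ (n : ℕ) (x : Fin n → B), (∀ i, SetLike.IsHomogeneousElem 𝒜 (x i)) ∧
      Algebra.adjoin k (Set.range x) = ⊤ := by
  classical
  obtain ⟨s, hs⟩ := Algebra.FiniteType.out (R := k) (A := B)
  let T : Finset B := s.biUnion fun b =>
    (decompose 𝒜 b).support.image fun p => (decompose 𝒜 b p : B)
  obtain ⟨n, x, hx⟩ := T.finite_toSet.fin_embedding
  refine ⟨n, x, fun i => ?_, ?_⟩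
  · have hi : x i ∈ T := by simpa [hx] using Set.mem_range_self (f := x) i
    obtain ⟨b, -, hb⟩ := Finset.mem_biUnion.1 hi
    obtain ⟨p, -, hp⟩ := Finset.mem_image.1 hb
    exact ⟨p, hp ▸ (decompose 𝒜 b p).2⟩
  · rw [hx, eq_top_iff, ← hs]
    refine Algebra.adjoin_le fun b hb => ?_
    rw [← sum_support_decompose 𝒜 b]
    exact sum_mem fun p hp => Algebra.subset_adjoin
      (Finset.mem_biUnion.2 ⟨b, hb, Finset.mem_image_of_mem _ hp⟩)

theorem mem_zero_of_isHomogeneousElem_one_add [Nontrivial B] {u : B}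
    (hu : SetLike.IsHomogeneousElem 𝒜 u) (hu' : SetLike.IsHomogeneousElem 𝒜 (1 + u)) :
    u ∈ 𝒜 0 := by
  obtain ⟨d, hd⟩ := hu
  obtain ⟨e, he⟩ := hu'
  rcases eq_or_ne e 0 with rfl | he0
  · simpa using sub_mem he (SetLike.one_mem_graded 𝒜)
  rcases eq_or_ne d 0 with rfl | hd0
  · exact hd
  have h0 : (decompose 𝒜 (1 + u) 0 : B) = 0 := decompose_of_mem_ne 𝒜 he he0
  rw [decompose_add, DirectSum.add_apply, AddSubgroup.coe_add,
    decompose_of_mem_same 𝒜 (SetLike.one_mem_graded 𝒜), decompose_of_mem_ne 𝒜 hd hd0,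
    add_zero] at h0
  exact absurd h0 one_ne_zero

variable [LinearOrder G] [IsOrderedAddMonoid G]

theorem isHomogeneousElem_of_mul_eq_one [IsDomain B] {x y : B} (hxy : x * y = 1) :
    SetLike.IsHomogeneousElem 𝒜 x := by
  classical
  set S := (decompose 𝒜 x).support
  set T := (decompose 𝒜 y).support
  have support_nonempty {z : B} (hz : z ≠ 0) : (decompose 𝒜 z).support.Nonempty := by
    rw [Finset.nonempty_iff_ne_empty, Ne, DFinsupp.support_eq_empty, ← decompose_zero 𝒜]
    exact (decompose 𝒜).injective.ne hz
  have hS : S.Nonempty := support_nonempty (left_ne_zero_of_mul_eq_one hxy)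
  have hT : T.Nonempty := support_nonempty (right_ne_zero_of_mul_eq_one hxy)
  have extreme : ∀ a ∈ S, ∀ b ∈ T, (∀ p ∈ S, ∀ q ∈ T, p + q = a + b → p = a ∧ q = b) →
      a + b = 0 := by
    intro a ha b hb huniq
    by_contra hne
    have hab := coe_decompose_mul_of_unique 𝒜 huniq
    rw [hxy, decompose_of_mem_ne 𝒜 (SetLike.one_mem_graded 𝒜) (Ne.symm hne)] at hab
    exact mul_ne_zero (by simpa using DFinsupp.mem_support_iff.1 ha)
      (by simpa using DFinsupp.mem_support_iff.1 hb) hab.symm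
  have hmin := extreme _ (S.min'_mem hS) _ (T.min'_mem hT) fun p hp q hq hpq =>
    (add_eq_add_iff_eq_and_eq (S.min'_le p hp) (T.min'_le q hq)).1 hpq.symm |>.imp Eq.symm Eq.symm
  have hmax := extreme _ (S.max'_mem hS) _ (T.max'_mem hT) fun p hp q hq =>
    (add_eq_add_iff_eq_and_eq (S.le_max' p hp) (T.le_max' q hq)).1
  have hminmax : S.min' hS = S.max' hS :=
    ((add_eq_add_iff_eq_and_eq (S.min'_le_max' hS) (T.min'_le_max' hT)).1
      (hmin.trans hmax.symm)).1
  refine ⟨S.min' hS, ?_⟩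
  rw [← sum_support_decompose 𝒜 x]
  refine sum_mem fun p hp => ?_
  rw [le_antisymm (S.min'_le p hp) (hminmax ▸ S.le_max' p hp)]
  exact (decompose 𝒜 x p).2

theorem algebraMap_mem_zero [IsDomain B] {k : Type*} [Field k] [Algebra k B] (c : k) :
    algebraMap k B c ∈ 𝒜 0 := by
  have homogeneous (c : k) : SetLike.IsHomogeneousElem 𝒜 (algebraMap k B c) := by
    rcases eq_or_ne c 0 with rfl | hc
    · exact ⟨0, by rw [map_zero]; exact zero_mem _⟩
    · exact isHomogeneousElem_of_mul_eq_one 𝒜 (y := algebraMap k B c⁻¹)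
        (by rw [← map_mul, mul_inv_cancel₀ hc, map_one])
  exact mem_zero_of_isHomogeneousElem_one_add 𝒜 (homogeneous c)
    (by simpa using homogeneous (1 + c))

end Graded

section GradingDegree

variable {B G : Type*} [CommRing B] [AddCommGroup G] [LinearOrder G] [DecidableEq G]
  (𝒜 : G → AddSubgroup B) [GradedRing 𝒜]

def IsGradingDegree (deg : B → WithBot G) : Prop :=
  ∀ x : B, x ≠ 0 → ∀ i : G, (deg x ≤ ↑i ↔ ∀ j : G, i < j → (decompose 𝒜 x j : B) = 0)

namespace IsGradingDegree

variable {𝒜} {deg : B → WithBot G} (h𝒜 : IsGradingDegree 𝒜 deg) (hdeg : IsDegreeFunction deg)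
include h𝒜 hdeg

theorem deg_le_of_mem {x : B} {d : G} (hx : x ∈ 𝒜 d) : deg x ≤ d := by
  rcases eq_or_ne x 0 with rfl | hx0
  · exact hdeg.deg_zero ▸ bot_le
  · exact (h𝒜 x hx0 d).2 fun j hj => decompose_of_mem_ne 𝒜 hx hj.ne

theorem le_deg_of_decompose_ne_zero {x : B} {j : G} (h : (decompose 𝒜 x j : B) ≠ 0) :
    (j : WithBot G) ≤ deg x := by
  have hx0 : x ≠ 0 := by
    rintro rfl
    simp at h
  obtain ⟨e, he⟩ := hdeg.exists_eq_coe hx0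
  rw [he, WithBot.coe_le_coe]
  by_contra! hej
  exact h ((h𝒜 x hx0 e).1 he.le j hej)

variable [IsOrderedAddMonoid G] {R : Type*} [CommRing R] [Algebra R B] (D : Derivation R B B)

theorem deg_derivation_le_of_forall_decompose {m : WithBot G} {b : B}
    (hb : ∀ p, deg (D (decompose 𝒜 b p)) ≤ p + m) : deg (D b) ≤ deg b + m := by
  classical
  conv_lhs => rw [← sum_support_decompose 𝒜 b, map_sum]
  refine hdeg.deg_sum_le _ _ fun p hp => (hb p).trans ?_
  gcongr
  exact h𝒜.le_deg_of_decompose_ne_zero hdeg (by simpa using DFinsupp.mem_support_iff.1 hp)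

theorem deg_derivation_le_of_adjoin_eq_top [IsDomain B] {k : Type*} [Field k] [Algebra k B]
    (D : Derivation k B B) {s : Set B} (hs : ∀ x ∈ s, SetLike.IsHomogeneousElem 𝒜 x)
    (hgen : Algebra.adjoin k s = ⊤) {m : WithBot G} (hm : ∀ x ∈ s, deg (D x) ≤ deg x + m)
    (b : B) : deg (D b) ≤ deg b + m := by
  refine h𝒜.deg_derivation_le_of_forall_decompose hdeg D fun p => ?_
  have hb : b ∈ Submodule.span k (Submonoid.closure s) := by
    rw [← Algebra.adjoin_eq_span, hgen]
    trivial
  induction hb using Submodule.span_induction generalizing p with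
  | mem w hw =>
    obtain ⟨d, hd⟩ : SetLike.IsHomogeneousElem 𝒜 w :=
      (Submonoid.closure_le (S := SetLike.homogeneousSubmonoid 𝒜)).2 hs hw
    rcases eq_or_ne d p with rfl | hdp
    · rw [decompose_of_mem_same 𝒜 hd]
      exact (hdeg.deg_derivation_le_of_mem_closure D hm hw).trans
        (by gcongr; exact h𝒜.deg_le_of_mem hdeg hd)
    · rw [decompose_of_mem_ne 𝒜 hd hdp, D.map_zero, hdeg.deg_zero]
      exact bot_le
  | zero => simp [hdeg.deg_zero]
  | add u v _ _ hu hv =>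
    rw [decompose_add, DirectSum.add_apply, AddSubgroup.coe_add, map_add]
    exact (hdeg.deg_add_le _ _).trans (max_le (hu p) (hv p))
  | smul c u _ hu =>
    have hc := algebraMap_mem_zero 𝒜 c
    rw [Algebra.smul_def, coe_decompose_mul_of_left_mem_zero 𝒜 hc, ← Algebra.smul_def,
      D.map_smul, Algebra.smul_def, hdeg.deg_mul]
    calc deg (algebraMap k B c) + deg (D (decompose 𝒜 u p)) ≤ 0 + (p + m) := by
          gcongr
          · exact_mod_cast h𝒜.deg_le_of_mem hdeg hc
          · exact hu p
      _ = p + m := zero_add _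

theorem isGreatest_degDeltaSet [IsDomain B] {k : Type*} [Field k] [Algebra k B] {n : ℕ}
    {x : Fin n → B} (hx : ∀ i, SetLike.IsHomogeneousElem 𝒜 (x i))
    (hgen : Algebra.adjoin k (Set.range x) = ⊤) (D : Derivation k B B) :
    IsGreatest (degDeltaSet deg D) (Finset.univ.sup fun i => degDelta deg D (x i)) := by
  set M := Finset.univ.sup fun i => degDelta deg D (x i)
  refine ⟨?_, ?_⟩
  · rcases eq_or_ne M ⊥ with hM | hM
    · exact ⟨1, one_ne_zero, hM ▸ hdeg.degDelta_eq_bot D.map_one_eq_zero⟩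
    have : Nonempty (Fin n) := by
      by_contra h
      simp [M, Finset.univ_eq_empty_iff.2 (not_nonempty_iff.1 h)] at hM
    obtain ⟨i, -, hi⟩ := Finset.exists_mem_eq_sup _ Finset.univ_nonempty
      fun i => degDelta deg D (x i)
    refine ⟨x i, fun hxi => hM (hi.trans ?_), hi.symm⟩
    rw [hxi]
    exact hdeg.degDelta_eq_bot D.map_zero
  · rintro _ ⟨z, -, rfl⟩
    rw [hdeg.degDelta_le_iff]
    refine h𝒜.deg_derivation_le_of_adjoin_eq_top hdeg D (Set.forall_mem_range.2 hx) hgen ?_ z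
    rintro _ ⟨i, rfl⟩
    exact (hdeg.degDelta_le_iff D _ _).1 (Finset.le_sup (f := fun i => degDelta deg D (x i))
      (Finset.mem_univ i))

end IsGradingDegree

end GradingDegree

theorem stmt12_general {k B G : Type*} [Field k] [CommRing B] [IsDomain B]
    [Algebra k B] [Algebra.FiniteType k B]
    [AddCommGroup G] [LinearOrder G] [IsOrderedAddMonoid G] [DecidableEq G]
    (𝒜 : G → AddSubgroup B) [GradedRing 𝒜]
    -- deg is the degree function determined by the grading 𝒜
    (deg : B → WithBot G) (hdegfn : IsDegreeFunction deg)
    (hdeg : ∀ x : B, x ≠ 0 → ∀ i : G,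
      (deg x ≤ ↑i ↔ ∀ j : G, i < j → (DirectSum.decompose 𝒜 x j : B) = 0)) :
    -- deg is tame over k:
    (∀ D : Derivation k B B, DegreeDefinedAt deg ⇑D) ∧
    -- more precisely:
    (∀ (n : ℕ) (x : Fin n → B), (∀ i : Fin n, ∃ d : G, x i ∈ 𝒜 d) →
      Algebra.adjoin k (Set.range x) = ⊤ →
      ∀ D : Derivation k B B,
        IsGreatest (degDeltaSet deg ⇑D)
          (Finset.univ.sup fun i => degDelta deg ⇑D (x i))) := by
  have h𝒜 : IsGradingDegree 𝒜 deg := hdeg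
  refine ⟨fun D => ?_, fun n x hx hgen D => h𝒜.isGreatest_degDeltaSet hdegfn hx hgen D⟩
  obtain ⟨n, x, hx, hgen⟩ := exists_fin_isHomogeneousElem_adjoin_eq_top 𝒜 (k := k)
  exact ⟨_, h𝒜.isGreatest_degDeltaSet hdegfn hx hgen D⟩

theorem stmt12 {k B G : Type*} [Field k] [CharZero k] [CommRing B] [IsDomain B]
    [Algebra k B] [Algebra.FiniteType k B]
    [AddCommGroup G] [LinearOrder G] [IsOrderedAddMonoid G] [DecidableEq G]
    (𝒜 : G → AddSubgroup B) [GradedRing 𝒜]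
    -- deg is the degree function determined by the grading 𝒜
    (deg : B → WithBot G) (hdegfn : IsDegreeFunction deg)
    (hdeg : ∀ x : B, x ≠ 0 → ∀ i : G,
      (deg x ≤ ↑i ↔ ∀ j : G, i < j → (DirectSum.decompose 𝒜 x j : B) = 0)) :
    -- deg is tame over k:
    (∀ D : Derivation k B B, DegreeDefinedAt deg ⇑D) ∧
    -- more precisely:
    (∀ (n : ℕ) (x : Fin n → B), (∀ i : Fin n, ∃ d : G, x i ∈ 𝒜 d) →
      Algebra.adjoin k (Set.range x) = ⊤ →
      ∀ D : Derivation k B B,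
        IsGreatest (degDeltaSet deg ⇑D)
          (Finset.univ.sup fun i => degDelta deg ⇑D (x i))) :=
  stmt12_general 𝒜 deg hdegfn hdeg
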